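/- Let G be a Kan cubical group and n ≥ 0. Then \tilde G_n equals the group of n-cycles Z_nM(G) of the Moore chain complex (where Z_0M(G) = M_0(G) and Z_nM(G) = Ker(∂_n^0 : M_n(G) → M_{n-1}(G)) for n > 0), and for x, y ∈ \tilde G_n one has x ∼ y if and only if xy^{-1} ∈ B_nM(G) = Im(∂_{n+1}^0 : M_{n+1}(G) → M_n(G)); consequently π_n(G) coincides with the homology group H_n(M(G)) = Z_nM(G)/B_nM(G). -/

import Mathlib

/-!
Multiplying a homotopy `z` from `x` to `y` by the degenerate cube `s₁ y` gives an `(n+1)`-cube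
whose only nontrivial face is `∂₁⁰ = x y⁻¹`, and conversely. The Kan condition moves such a lone
face to any other position: take the cube as one wall of a box whose other walls are trivial,
leave open the wall meeting it along its nontrivial face, and fill; the open wall of the filler
is a cube with the same lone face at a new position. With the lone face in last position the cube
is an element of `M_{n+1}(G)` with boundary `x y⁻¹`.
-/

universe u

/-- The Kan condition for a cubical set, given by its family of sets and face maps
(`d n j ε : X (n+1) → X n` is the face `∂_j^ε`, `1 ≤ j ≤ n+1`). -/
def IsKan (X : ℕ → Type u) (d : ∀ n : ℕ, ℕ → Bool → X (n + 1) → X n) : Prop :=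
  (∀ (i : ℕ) (α : Bool), 1 ≤ i → i ≤ 1 → ∀ x : ℕ → Bool → X 0,
    ∃ z : X 1, ∀ (j : ℕ) (ε : Bool), 1 ≤ j → j ≤ 1 → (j, ε) ≠ (i, α) → d 0 j ε z = x j ε) ∧
  (∀ (n i : ℕ) (α : Bool), 1 ≤ i → i ≤ n + 2 → ∀ x : ℕ → Bool → X (n + 1),
    (∀ (j k : ℕ) (ε ω : Bool), 1 ≤ j → j < k → k ≤ n + 2 →
      (j, ε) ≠ (i, α) → (k, ω) ≠ (i, α) → d n j ε (x k ω) = d n (k - 1) ω (x j ε)) →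
    ∃ z : X (n + 2), ∀ (j : ℕ) (ε : Bool), 1 ≤ j → j ≤ n + 2 → (j, ε) ≠ (i, α) →
      d (n + 1) j ε z = x j ε)

/-- `\tilde G_n`: the set of `n`-cubes all of whose faces are the unit. -/
def cubTilde (G : ℕ → Type u) [∀ n, Monoid (G n)]
    (d : ∀ n : ℕ, ℕ → Bool → (G (n + 1) →* G n)) : ∀ n, Set (G n)
  | 0 => Set.univ
  | (n + 1) => {x | ∀ (j : ℕ) (ε : Bool), 1 ≤ j → j ≤ n + 1 → d n j ε x = 1}

/-- The homotopy relation `x ∼ y` on `\tilde G_n`. -/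
def cubRel (G : ℕ → Type u) [∀ n, Monoid (G n)]
    (d : ∀ n : ℕ, ℕ → Bool → (G (n + 1) →* G n)) (n : ℕ) (x y : G n) : Prop :=
  ∃ z : G (n + 1), d n 1 false z = x ∧ d n 1 true z = y ∧
    ∀ (j : ℕ) (ε : Bool), 2 ≤ j → j ≤ n + 1 → d n j ε z = 1

/-- The Moore subgroup `M_n(G)` of a cubical group. -/
def MSubG (G : ℕ → Type u) [∀ n, Group (G n)]
    (d : ∀ n : ℕ, ℕ → Bool → (G (n + 1) →* G n)) : ∀ n, Subgroup (G n)
  | 0 => ⊤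
  | (n + 1) => (⨅ i ∈ Finset.Icc 1 (n + 1), (d n i true).ker) ⊓
      (⨅ i ∈ Finset.Icc 1 n, (d n i false).ker)

/-- The cycles `Z_nM(G)` of the Moore chain complex, as a set. -/
def ZSetG (G : ℕ → Type u) [∀ n, Group (G n)]
    (d : ∀ n : ℕ, ℕ → Bool → (G (n + 1) →* G n)) : ∀ n, Set (G n)
  | 0 => Set.univ
  | (n + 1) => {x | x ∈ MSubG G d (n + 1) ∧ d n (n + 1) false x = 1}

def IsLoneFace (G : ℕ → Type u) [∀ n, Monoid (G n)]
    (d : ∀ n : ℕ, ℕ → Bool → (G (n + 1) →* G n)) (n i : ℕ) (g : G n) : Prop :=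
  ∃ u : G (n + 1), d n i false u = g ∧
    ∀ (j : ℕ) (ε : Bool), 1 ≤ j → j ≤ n + 1 → (j, ε) ≠ (i, false) → d n j ε u = 1

def FacesCommute (G : ℕ → Type u) [∀ n, Monoid (G n)]
    (d : ∀ n : ℕ, ℕ → Bool → (G (n + 1) →* G n)) : Prop :=
  ∀ (n i j : ℕ) (α ε : Bool), 1 ≤ i → i < j → j ≤ n + 2 →
    ∀ x, d n i α (d (n + 1) j ε x) = d n (j - 1) ε (d (n + 1) i α x)

section Monoid

variable {G : ℕ → Type u} [∀ n, Monoid (G n)] {d : ∀ n : ℕ, ℕ → Bool → (G (n + 1) →* G n)}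

/-- Placed at `(a, 0)` in an otherwise trivial box, `u` meets the wall `(b, 0)` along its only
nontrivial face `(c, 0)`; leaving that wall open makes the box compatible. -/
lemma exists_filler_of_single_face (hkan : IsKan G (fun n i ε x => d n i ε x))
    {n a b c : ℕ} (ha : 1 ≤ a) (ha' : a ≤ n + 2) (hc : 1 ≤ c) (hc' : c ≤ n + 1)
    (hb : b = if c < a then c else c + 1) {u : G (n + 1)}
    (hu : ∀ (j : ℕ) (ε : Bool), 1 ≤ j → j ≤ n + 1 → (j, ε) ≠ (c, false) → d n j ε u = 1) :
    ∃ z : G (n + 2), d (n + 1) a false z = u ∧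
      ∀ (j : ℕ) (ε : Bool), 1 ≤ j → j ≤ n + 2 → (j, ε) ≠ (a, false) → (j, ε) ≠ (b, false) →
        d (n + 1) j ε z = 1 := by
  have hab : (a, false) ≠ (b, false) := by
    simp only [ne_eq, Prod.mk.injEq, and_true]; split_ifs at hb <;> omega
  have hbox : ∀ (j k : ℕ) (ε ω : Bool), 1 ≤ j → j < k → k ≤ n + 2 →
      (j, ε) ≠ (b, false) → (k, ω) ≠ (b, false) →
      d n j ε (if (k, ω) = (a, false) then u else 1) =
        d n (k - 1) ω (if (j, ε) = (a, false) then u else 1) := by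
    intro j k ε ω hj hjk hk hjb hkb
    simp only [ne_eq, Prod.mk.injEq] at hjb hkb ⊢
    by_cases hka : k = a ∧ ω = false
    · obtain ⟨rfl, rfl⟩ := hka
      rw [if_pos ⟨rfl, rfl⟩, if_neg (fun h => hjk.ne h.1), map_one]
      refine hu j ε hj (by omega) ?_
      rintro ⟨rfl, rfl⟩
      exact hjb ⟨by rw [hb, if_pos hjk], rfl⟩
    · by_cases hja : j = a ∧ ε = false
      · obtain ⟨rfl, rfl⟩ := hja
        rw [if_neg hka, if_pos ⟨rfl, rfl⟩, map_one]
        refine (hu (k - 1) ω (by omega) (by omega) ?_).symm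
        rintro ⟨hkc, rfl⟩
        exact hkb ⟨by rw [hb, if_neg (by omega)]; omega, rfl⟩
      · rw [if_neg hka, if_neg hja, map_one, map_one]
  obtain ⟨z, hz⟩ := hkan.2 n b false (by split_ifs at hb <;> omega)
    (by split_ifs at hb <;> omega) (fun k ω => if (k, ω) = (a, false) then u else 1) hbox
  refine ⟨z, by simpa using hz a false ha ha' hab, fun j ε hj hj' hja hjb => ?_⟩
  simpa [hja] using hz j ε hj hj' hjb

lemma IsLoneFace.of_le (hdd : FacesCommute G d) (hkan : IsKan G (fun n i ε x => d n i ε x))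
    {n c c' : ℕ} {g : G n} (h : IsLoneFace G d n c g) (hc' : 1 ≤ c') (hc'c : c' ≤ c)
    (hc : c ≤ n + 1) : IsLoneFace G d n c' g := by
  obtain ⟨u, hug, hu⟩ := h
  obtain ⟨z, hzu, hz⟩ := exists_filler_of_single_face hkan (b := c + 1) hc' (by omega)
    (by omega) hc (by rw [if_neg (by omega)]) hu
  refine ⟨d (n + 1) (c + 1) false z, ?_, fun j ε hj hj' hjc' => ?_⟩
  · rw [hdd n c' (c + 1) false false hc' (by omega) (by omega), hzu, Nat.add_sub_cancel, hug]
  · rcases lt_or_ge j (c + 1) with hjc | hjc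
    · rw [hdd n j (c + 1) ε false hj hjc (by omega), hz j ε hj (by omega) hjc' (by simp; omega),
        map_one]
    · rw [← Nat.add_sub_cancel j 1, ← hdd n (c + 1) (j + 1) false ε (by omega) (by omega)
        (by omega), hz (j + 1) ε (by omega) (by omega) (by simp; omega) (by simp; omega),
        map_one]

lemma IsLoneFace.of_ge (hdd : FacesCommute G d) (hkan : IsKan G (fun n i ε x => d n i ε x))
    {n c c' : ℕ} {g : G n} (h : IsLoneFace G d n c g) (hc : 1 ≤ c) (hcc' : c ≤ c')
    (hc' : c' ≤ n + 1) : IsLoneFace G d n c' g := by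
  obtain ⟨u, hug, hu⟩ := h
  obtain ⟨z, hzu, hz⟩ := exists_filler_of_single_face hkan (a := c' + 1) (b := c) (by omega)
    (by omega) hc (by omega) (by rw [if_pos (by omega)]) hu
  refine ⟨d (n + 1) c false z, ?_, fun j ε hj hj' hjc' => ?_⟩
  · rw [← Nat.add_sub_cancel c' 1, ← hdd n c (c' + 1) false false hc (by omega) (by omega), hzu,
      hug]
  · rcases lt_or_ge j c with hjc | hjc
    · rw [hdd n j c ε false hj hjc (by omega), hz j ε hj (by omega) (by simp; omega)
        (by simp; omega), map_one]
    · rw [← Nat.add_sub_cancel j 1, ← hdd n c (j + 1) false ε hc (by omega) (by omega),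
        hz (j + 1) ε (by omega) (by omega) (by simpa using hjc') (by simp; omega), map_one]

lemma isLoneFace_iff (hdd : FacesCommute G d) (hkan : IsKan G (fun n i ε x => d n i ε x))
    {n c c' : ℕ} (hc : 1 ≤ c) (hc₁ : c ≤ n + 1) (hc' : 1 ≤ c') (hc'₁ : c' ≤ n + 1) (g : G n) :
    IsLoneFace G d n c g ↔ IsLoneFace G d n c' g := by
  rcases le_total c c' with h | h
  · exact ⟨(·.of_ge hdd hkan hc h hc'₁), (·.of_le hdd hkan hc h hc'₁)⟩
  · exact ⟨(·.of_le hdd hkan hc' h hc₁), (·.of_ge hdd hkan hc' h hc₁)⟩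

end Monoid

section Group

variable {G : ℕ → Type u} [∀ n, Group (G n)] {d : ∀ n : ℕ, ℕ → Bool → (G (n + 1) →* G n)}

lemma mem_MSubG_succ_iff {n : ℕ} {w : G (n + 1)} :
    w ∈ MSubG G d (n + 1) ↔
      ∀ (j : ℕ) (ε : Bool), 1 ≤ j → j ≤ n + 1 → (j, ε) ≠ (n + 1, false) → d n j ε w = 1 := by
  simp only [MSubG, Subgroup.mem_inf, Subgroup.mem_iInf, MonoidHom.mem_ker, Finset.mem_Icc]
  constructor
  · rintro ⟨htrue, hfalse⟩ j (_ | _) hj hj' hjn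
    · exact hfalse j ⟨hj, by simp only [ne_eq, Prod.mk.injEq, and_true] at hjn; omega⟩
    · exact htrue j ⟨hj, hj'⟩
  · intro h
    exact ⟨fun j hj => h j true hj.1 hj.2 (by simp),
      fun j hj => h j false hj.1 (by omega) (by simp; omega)⟩

lemma cubTilde_eq_ZSetG (n : ℕ) : cubTilde G d n = ZSetG G d n := by
  cases n with
  | zero => rfl
  | succ n =>
    ext w
    simp only [cubTilde, ZSetG, Set.mem_ofPred_eq, mem_MSubG_succ_iff]
    refine ⟨fun h => ⟨fun j ε hj hj' _ => h j ε hj hj', h (n + 1) false (by omega) le_rfl⟩,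
      fun ⟨h, hlast⟩ j ε hj hj' => ?_⟩
    by_cases hjn : (j, ε) = (n + 1, false)
    · obtain ⟨rfl, rfl⟩ := Prod.mk.inj hjn
      exact hlast
    · exact h j ε hj hj' hjn

lemma isLoneFace_last_iff_mem_map {n : ℕ} {g : G n} :
    IsLoneFace G d n (n + 1) g ↔ g ∈ (MSubG G d (n + 1)).map (d n (n + 1) false) := by
  simp only [IsLoneFace, Subgroup.mem_map, mem_MSubG_succ_iff]
  exact exists_congr fun _ => and_comm

variable {s : ∀ n : ℕ, ℕ → (G n →* G (n + 1))}

lemma face_degeneracy_one_eq_one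
    (hds_gt : ∀ (n i j : ℕ) (α : Bool), 1 ≤ j → j < i → i ≤ n + 2 →
      ∀ x, d (n + 1) i α (s (n + 1) j x) = s n j (d n (i - 1) α x))
    {n : ℕ} {y : G n} (hy : y ∈ cubTilde G d n) {j : ℕ} (ε : Bool) (hj : 2 ≤ j)
    (hj' : j ≤ n + 1) : d n j ε (s n 1 y) = 1 := by
  cases n with
  | zero => omega
  | succ n => rw [hds_gt n j 1 ε le_rfl hj hj', hy (j - 1) ε (by omega) (by omega), map_one]

lemma cubRel_iff_isLoneFace_one
    (hds_eq : ∀ (n i : ℕ) (α : Bool), 1 ≤ i → i ≤ n + 1 → ∀ x, d n i α (s n i x) = x)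
    (hds_gt : ∀ (n i j : ℕ) (α : Bool), 1 ≤ j → j < i → i ≤ n + 2 →
      ∀ x, d (n + 1) i α (s (n + 1) j x) = s n j (d n (i - 1) α x))
    {n : ℕ} (x : G n) {y : G n} (hy : y ∈ cubTilde G d n) :
    cubRel G d n x y ↔ IsLoneFace G d n 1 (x * y⁻¹) := by
  have hs : ∀ α, d n 1 α (s n 1 y) = y := fun α => hds_eq n 1 α le_rfl (by omega) y
  constructor
  · rintro ⟨z, hz₀, hz₁, hz⟩
    refine ⟨z * (s n 1 y)⁻¹, by rw [map_mul, map_inv, hz₀, hs], fun j ε hj hj' hjε => ?_⟩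
    rcases Nat.lt_or_ge j 2 with hj₂ | hj₂
    · obtain rfl : j = 1 := by omega
      obtain rfl : ε = true := by simpa using hjε
      rw [map_mul, map_inv, hz₁, hs, mul_inv_cancel]
    · rw [map_mul, map_inv, hz j ε hj₂ hj', face_degeneracy_one_eq_one hds_gt hy ε hj₂ hj',
        mul_inv_cancel]
  · rintro ⟨w, hw₀, hw⟩
    refine ⟨w * s n 1 y, by rw [map_mul, hw₀, hs, inv_mul_cancel_right],
      by rw [map_mul, hw 1 true le_rfl (by omega) (by simp), hs, one_mul], fun j ε hj hj' => ?_⟩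
    rw [map_mul, hw j ε (by omega) hj' (by simp; omega),
      face_degeneracy_one_eq_one hds_gt hy ε hj hj', mul_one]

end Group

theorem stmt6_general (G : ℕ → Type u) [∀ n, Group (G n)]
    (d : ∀ n : ℕ, ℕ → Bool → (G (n + 1) →* G n))
    (s : ∀ n : ℕ, ℕ → (G n →* G (n + 1)))
    (hdd : ∀ (n i j : ℕ) (α ε : Bool), 1 ≤ i → i < j → j ≤ n + 2 →
      ∀ x, d n i α (d (n + 1) j ε x) = d n (j - 1) ε (d (n + 1) i α x))
    (hds_eq : ∀ (n i : ℕ) (α : Bool), 1 ≤ i → i ≤ n + 1 → ∀ x, d n i α (s n i x) = x)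
    (hds_gt : ∀ (n i j : ℕ) (α : Bool), 1 ≤ j → j < i → i ≤ n + 2 →
      ∀ x, d (n + 1) i α (s (n + 1) j x) = s n j (d n (i - 1) α x))
    (hkan : IsKan G (fun n i ε x => d n i ε x)) :
    (∀ n, cubTilde G d n = ZSetG G d n) ∧
    (∀ (n : ℕ) (x y : G n), x ∈ cubTilde G d n → y ∈ cubTilde G d n →
      (cubRel G d n x y ↔ x * y⁻¹ ∈ (MSubG G d (n + 1)).map (d n (n + 1) false))) ∧
    (∀ n : ℕ, Nonempty
      (Quot (fun a b : ↥(cubTilde G d n) => cubRel G d n ↑a ↑b) ≃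
       Quot (fun a b : ↥(cubTilde G d n) =>
         (a : G n) * (b : G n)⁻¹ ∈ (MSubG G d (n + 1)).map (d n (n + 1) false)))) := by
  have hrel : ∀ (n : ℕ) (x y : G n), x ∈ cubTilde G d n → y ∈ cubTilde G d n →
      (cubRel G d n x y ↔ x * y⁻¹ ∈ (MSubG G d (n + 1)).map (d n (n + 1) false)) :=
    fun n x y _ hy => by
      rw [cubRel_iff_isLoneFace_one hds_eq hds_gt x hy, ← isLoneFace_last_iff_mem_map,
        isLoneFace_iff hdd hkan le_rfl (by omega) (by omega) le_rfl]
  exact ⟨cubTilde_eq_ZSetG, hrel,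
    fun n => ⟨Quot.congrRight fun a b => hrel n a b a.2 b.2⟩⟩

theorem stmt6 (G : ℕ → Type u) [∀ n, Group (G n)]
    (d : ∀ n : ℕ, ℕ → Bool → (G (n + 1) →* G n))
    (s : ∀ n : ℕ, ℕ → (G n →* G (n + 1)))
    (hdd : ∀ (n i j : ℕ) (α ε : Bool), 1 ≤ i → i < j → j ≤ n + 2 →
      ∀ x, d n i α (d (n + 1) j ε x) = d n (j - 1) ε (d (n + 1) i α x))
    (hss : ∀ (n i j : ℕ), 1 ≤ i → i ≤ j → j ≤ n + 1 →
      ∀ x, s (n + 1) i (s n j x) = s (n + 1) (j + 1) (s n i x))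
    (hds_lt : ∀ (n i j : ℕ) (α : Bool), 1 ≤ i → i < j → j ≤ n + 2 →
      ∀ x, d (n + 1) i α (s (n + 1) j x) = s n (j - 1) (d n i α x))
    (hds_eq : ∀ (n i : ℕ) (α : Bool), 1 ≤ i → i ≤ n + 1 → ∀ x, d n i α (s n i x) = x)
    (hds_gt : ∀ (n i j : ℕ) (α : Bool), 1 ≤ j → j < i → i ≤ n + 2 →
      ∀ x, d (n + 1) i α (s (n + 1) j x) = s n j (d n (i - 1) α x))
    (hkan : IsKan G (fun n i ε x => d n i ε x)) :
    (∀ n, cubTilde G d n = ZSetG G d n) ∧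
    (∀ (n : ℕ) (x y : G n), x ∈ cubTilde G d n → y ∈ cubTilde G d n →
      (cubRel G d n x y ↔ x * y⁻¹ ∈ (MSubG G d (n + 1)).map (d n (n + 1) false))) ∧
    (∀ n : ℕ, Nonempty
      (Quot (fun a b : ↥(cubTilde G d n) => cubRel G d n ↑a ↑b) ≃
       Quot (fun a b : ↥(cubTilde G d n) =>
         (a : G n) * (b : G n)⁻¹ ∈ (MSubG G d (n + 1)).map (d n (n + 1) false)))) :=
  stmt6_general G d s hdd hds_eq hds_gt hkan
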